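/- Let n ≥ 2 and M ∈ ℝ^{n×n}. Then MᵀM is symmetric positive semidefinite, the maximum of Q ↦ trace{MQ} over Q ∈ O(n) is attained and equals trace{(MᵀM)^{1/2}}, and moreover trace{(MᵀM)^{1/2}} ≥ n·|det M|^{1/n}. -/

import Mathlib

/-!
Let `S = (MᵀM)^{1/2}`. Since `MᵀM = SᵀS`, the maps `x ↦ Mx` and `x ↦ Sx` have the same norms,
so `M = W S` with `W` orthogonal (polar decomposition). Then `trace (M Q) = trace (S (Q W))`, and
writing `S = V D Vᵀ` with `D = diag d ≥ 0`, for orthogonal `R` we get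
`trace (S R) = ∑ dᵢ (Vᵀ R V)ᵢᵢ ≤ ∑ dᵢ = trace S`, with equality at `Q = Wᵀ`.
Finally `det S = √(det (MᵀM)) = |det M|`, and AM-GM on the eigenvalues of `S` gives
`n (det S)^{1/n} ≤ trace S`.
-/

open MeasureTheory Matrix

noncomputable section

abbrev EucSp (n : ℕ) := EuclideanSpace ℝ (Fin n)

/-- Principal square root of a positive semidefinite matrix (zero otherwise). -/
noncomputable def msqrt {n : ℕ} (A : Matrix (Fin n) (Fin n) ℝ) : Matrix (Fin n) (Fin n) ℝ :=
  open scoped Classical in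
  if h : A.PosSemidef then (h.1.eigenvectorUnitary : Matrix (Fin n) (Fin n) ℝ) *
    diagonal ((↑) ∘ (Real.sqrt ·) ∘ h.1.eigenvalues) *
    (star h.1.eigenvectorUnitary : Matrix (Fin n) (Fin n) ℝ) else 0

/-- `A ∈ 𝒜(λ,Λ)`: symmetric and uniformly elliptic. -/
def UnifElliptic {n : ℕ} (lam Lam : ℝ) (A : Matrix (Fin n) (Fin n) ℝ) : Prop :=
  A.IsSymm ∧ ∀ ξ : Fin n → ℝ,
    lam * (ξ ⬝ᵥ ξ) ≤ ξ ⬝ᵥ A.mulVec ξ ∧ ξ ⬝ᵥ A.mulVec ξ ≤ Lam * (ξ ⬝ᵥ ξ)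

/-- Membership in the orthogonal group `O(n)`. -/
def IsOrthMat {n : ℕ} (Q : Matrix (Fin n) (Fin n) ℝ) : Prop :=
  Q * Qᵀ = 1 ∧ Qᵀ * Q = 1

/-- Matrix acting on Euclidean space. -/
noncomputable def mvE {n : ℕ} (M : Matrix (Fin n) (Fin n) ℝ) (y : EucSp n) : EucSp n :=
  (EuclideanSpace.equiv (Fin n) ℝ).symm (M.mulVec ((EuclideanSpace.equiv (Fin n) ℝ) y))

/-- The ellipsoid `x + ε A^{1/2} 𝔹`. -/
noncomputable def ellipsoid {n : ℕ} (ε : ℝ) (M : Matrix (Fin n) (Fin n) ℝ) (x : EucSp n) :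
    Set (EucSp n) :=
  (fun y => x + ε • mvE (msqrt M) y) '' Metric.ball (0 : EucSp n) 1

/-- The matrix `J_α = diag(α-1, 1, …, 1)`. -/
noncomputable def Jmat (n : ℕ) (α : ℝ) : Matrix (Fin n) (Fin n) ℝ :=
  Matrix.diagonal (fun i => if (i : ℕ) = 0 then α - 1 else 1)

/-- Reflection in the first coordinate axis. -/
noncomputable def J0 (n : ℕ) : Matrix (Fin n) (Fin n) ℝ :=
  Matrix.diagonal (fun i => if (i : ℕ) = 0 then -1 else 1)

/-- The first standard basis vector `e₁`. -/
noncomputable def e1 (n : ℕ) : EucSp n :=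
  (EuclideanSpace.equiv (Fin n) ℝ).symm (fun i => if (i : ℕ) = 0 then 1 else 0)

/-- `f₁(x,z) = C|x-z|^α + C̃|x+z|²`. -/
noncomputable def f1 {n : ℕ} (α C Ct : ℝ) (x z : EucSp n) : ℝ :=
  C * ‖x - z‖ ^ α + Ct * ‖x + z‖ ^ 2

/-- The annular step function `f₂`. -/
noncomputable def f2 {n : ℕ} (α C lam ε : ℝ) (N : ℕ) (x z : EucSp n) : ℝ :=
  if ‖x - z‖ / (Real.sqrt lam * ε) > (N : ℝ) then 0
  else C ^ (2 * (2 * N - ⌈2 * ‖x - z‖ / (Real.sqrt lam * ε)⌉₊)) * ε ^ α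

open scoped MatrixOrder

theorem msqrt_eq_sqrt {n : ℕ} {A : Matrix (Fin n) (Fin n) ℝ} (hA : A.PosSemidef) :
    msqrt A = CFC.sqrt A := by
  rw [CFC.sqrt_eq_real_sqrt A hA.nonneg, cfcₙ_eq_cfc, hA.1.cfc_eq, msqrt, dif_pos hA,
    IsHermitian.cfc, Unitary.conjStarAlgAut_apply]
  rfl

theorem isOrthMat_iff_mem_orthogonalGroup {n : ℕ} {Q : Matrix (Fin n) (Fin n) ℝ} :
    IsOrthMat Q ↔ Q ∈ orthogonalGroup (Fin n) ℝ :=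
  ⟨fun h => (mem_orthogonalGroup_iff _ _).2 h.1,
    fun h => ⟨(mem_orthogonalGroup_iff _ _).1 h, (mem_orthogonalGroup_iff' _ _).1 h⟩⟩

section Polar

variable {𝕜 V : Type*} [RCLike 𝕜] [NormedAddCommGroup V] [InnerProductSpace 𝕜 V]
  [FiniteDimensional 𝕜 V]

/- Since `ker g ≤ ker f`, the assignment `g x ↦ f x` is a well-defined isometry on `range g`,
which `LinearIsometry.extend` extends to all of `V`. -/
theorem LinearMap.exists_linearIsometry_comp_eq {f g : V →ₗ[𝕜] V} (h : ∀ x, ‖f x‖ = ‖g x‖) :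
    ∃ u : V →ₗᵢ[𝕜] V, ∀ x, u (g x) = f x := by
  have hker : LinearMap.ker g ≤ LinearMap.ker f := fun x hx => by
    rw [LinearMap.mem_ker] at hx ⊢
    rw [← norm_eq_zero, h, hx, norm_zero]
  let u₀ : LinearMap.range g →ₗ[𝕜] V :=
    (LinearMap.ker g).liftQ f hker ∘ₗ g.quotKerEquivRange.symm
  have hu₀ : ∀ x, u₀ ⟨g x, LinearMap.mem_range_self g x⟩ = f x := fun x => by
    simp [u₀]
  have hnorm : ∀ y, ‖u₀ y‖ = ‖y‖ := by
    rintro ⟨_, x, rfl⟩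
    rw [hu₀, h, Submodule.coe_norm]
  let u : LinearMap.range g →ₗᵢ[𝕜] V := ⟨u₀, hnorm⟩
  exact ⟨u.extend, fun x => (LinearIsometry.extend_apply u ⟨g x, _⟩).trans (hu₀ x)⟩

end Polar

namespace Matrix

section Polar

variable {𝕜 ι : Type*} [RCLike 𝕜] [Fintype ι] [DecidableEq ι]

theorem norm_toEuclideanLin_eq_of_conjTranspose_mul_self_eq {A B : Matrix ι ι 𝕜}
    (h : Aᴴ * A = Bᴴ * B) (x : EuclideanSpace 𝕜 ι) :
    ‖A.toEuclideanLin x‖ = ‖B.toEuclideanLin x‖ := by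
  have hinner : ∀ C : Matrix ι ι 𝕜, inner 𝕜 (C.toEuclideanLin x) (C.toEuclideanLin x) =
      inner 𝕜 x ((Cᴴ * C).toEuclideanLin x) := fun C => by
    rw [← LinearMap.adjoint_inner_right, ← toEuclideanLin_conjTranspose_eq_adjoint,
      toLpLin_mul_same, LinearMap.comp_apply]
  rw [norm_eq_sqrt_re_inner (𝕜 := 𝕜), norm_eq_sqrt_re_inner (𝕜 := 𝕜), hinner, hinner, h]

/-- Polar decomposition. -/
theorem exists_mem_unitaryGroup_mul_eq_of_conjTranspose_mul_self_eq {A B : Matrix ι ι 𝕜}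
    (h : Aᴴ * A = Bᴴ * B) : ∃ U ∈ unitaryGroup ι 𝕜, A = U * B := by
  obtain ⟨u, hu⟩ := LinearMap.exists_linearIsometry_comp_eq
    (norm_toEuclideanLin_eq_of_conjTranspose_mul_self_eq h)
  have hU : toEuclideanLin (toEuclideanLin.symm u.toLinearMap) = u.toLinearMap :=
    LinearEquiv.apply_symm_apply _ _
  refine ⟨toEuclideanLin.symm u.toLinearMap, ?_, toEuclideanLin.injective ?_⟩
  · rw [mem_unitaryGroup_iff', star_eq_conjTranspose]
    apply toEuclideanLin.injective
    rw [toLpLin_mul_same, toEuclideanLin_conjTranspose_eq_adjoint, hU,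
      LinearIsometry.adjoint_comp_self', toLpLin_one]
  · ext x : 1
    rw [toLpLin_mul_same, hU, LinearMap.comp_apply, LinearIsometry.coe_toLinearMap, hu]

end Polar

variable {ι : Type*} [Fintype ι] [DecidableEq ι]

theorem trace_diagonal_mul_le_of_mem_orthogonalGroup {d : ι → ℝ} (hd : ∀ i, 0 ≤ d i)
    {R : Matrix ι ι ℝ} (hR : R ∈ orthogonalGroup ι ℝ) : trace (diagonal d * R) ≤ ∑ i, d i := by
  simp only [trace, diag_apply, diagonal_mul]
  refine Finset.sum_le_sum fun i _ => mul_le_of_le_one_right (hd i) ?_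
  exact (le_abs_self _).trans (entry_norm_bound_of_unitary hR i i)

theorem PosSemidef.trace_mul_le_trace_of_mem_orthogonalGroup {S R : Matrix ι ι ℝ}
    (hS : S.PosSemidef) (hR : R ∈ orthogonalGroup ι ℝ) : trace (S * R) ≤ trace S := by
  set V : Matrix ι ι ℝ := ↑hS.1.eigenvectorUnitary
  set D : Matrix ι ι ℝ := diagonal (RCLike.ofReal ∘ hS.1.eigenvalues)
  have hSV : S = V * D * star V := by
    conv_lhs => rw [hS.1.spectral_theorem, Unitary.conjStarAlgAut_apply]
  have hVRV : star V * R * V ∈ orthogonalGroup ι ℝ :=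
    mul_mem (mul_mem (Unitary.star_mem hS.1.eigenvectorUnitary.2) hR) hS.1.eigenvectorUnitary.2
  calc trace (S * R)
      = trace (D * (star V * R * V)) := by
        conv_lhs => rw [hSV]
        rw [Matrix.mul_assoc V, Matrix.mul_assoc V, trace_mul_comm V]
        simp only [Matrix.mul_assoc]
    _ ≤ ∑ i, hS.1.eigenvalues i :=
        trace_diagonal_mul_le_of_mem_orthogonalGroup (fun i => hS.eigenvalues_nonneg i) hVRV
    _ = trace S := by simp [hS.1.trace_eq_sum_eigenvalues]

theorem PosSemidef.card_mul_det_rpow_le_trace {S : Matrix ι ι ℝ} (hS : S.PosSemidef) :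
    Fintype.card ι * S.det ^ ((1 : ℝ) / Fintype.card ι) ≤ S.trace := by
  rcases isEmpty_or_nonempty ι with hι | hι
  · simp
  have hcard : (0 : ℝ) < Fintype.card ι := by exact_mod_cast Fintype.card_pos
  have amgm := Real.geom_mean_le_arith_mean Finset.univ (fun _ => 1) hS.1.eigenvalues
    (fun _ _ => zero_le_one) (by simpa using hcard) (fun i _ => hS.eigenvalues_nonneg i)
  simp only [Real.rpow_one, Finset.sum_const, Finset.card_univ, nsmul_eq_mul, mul_one,
    one_mul] at amgm
  rw [hS.1.det_eq_prod_eigenvalues, hS.1.trace_eq_sum_eigenvalues]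
  simp only [RCLike.ofReal_real_eq_id, id, one_div]
  rw [le_div_iff₀ hcard] at amgm
  linarith

end Matrix

theorem stmt4_general {n : ℕ} (M : Matrix (Fin n) (Fin n) ℝ) :
    (Mᵀ * M).IsSymm ∧ (Mᵀ * M).PosSemidef ∧
    IsGreatest {t : ℝ | ∃ Q, IsOrthMat Q ∧ t = Matrix.trace (M * Q)}
      (Matrix.trace (msqrt (Mᵀ * M))) ∧
    Matrix.trace (msqrt (Mᵀ * M)) ≥ (n : ℝ) * |M.det| ^ ((1 : ℝ) / n) := by
  have hMM : (Mᵀ * M).PosSemidef := by simpa using posSemidef_conjTranspose_mul_self M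
  rw [msqrt_eq_sqrt hMM]
  set S := CFC.sqrt (Mᵀ * M)
  have hS : S.PosSemidef := (CFC.sqrt_nonneg _).posSemidef
  have hSS : Mᴴ * M = Sᴴ * S := by
    rw [hS.1.eq, CFC.sqrt_mul_sqrt_self _ hMM.nonneg, conjTranspose_eq_transpose_of_trivial]
  have hdet : S.det = |M.det| := by
    rw [hMM.det_sqrt, RCLike.sqrt_real, det_mul, det_transpose, Real.sqrt_mul_self_eq_abs]
  obtain ⟨W, hW, hMW⟩ := exists_mem_unitaryGroup_mul_eq_of_conjTranspose_mul_self_eq hSS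
  refine ⟨isSymm_transpose_mul_self M, hMM, ⟨⟨star W, ?_, ?_⟩, ?_⟩, ?_⟩
  · exact isOrthMat_iff_mem_orthogonalGroup.2 (Unitary.star_mem hW)
  · rw [hMW, trace_mul_cycle, Unitary.star_mul_self_of_mem hW, Matrix.one_mul]
  · rintro _ ⟨Q, hQ, rfl⟩
    rw [hMW, Matrix.mul_assoc, trace_mul_comm W, Matrix.mul_assoc]
    exact hS.trace_mul_le_trace_of_mem_orthogonalGroup
      (mul_mem (isOrthMat_iff_mem_orthogonalGroup.1 hQ) hW)
  · simpa [hdet] using hS.card_mul_det_rpow_le_trace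

/-- optimization of `Q ↦ trace{MQ}` over the orthogonal group
(Lemma 4.4). -/
theorem stmt4 {n : ℕ} (hn : 2 ≤ n) (M : Matrix (Fin n) (Fin n) ℝ) :
    (Mᵀ * M).IsSymm ∧ (Mᵀ * M).PosSemidef ∧
    IsGreatest {t : ℝ | ∃ Q, IsOrthMat Q ∧ t = Matrix.trace (M * Q)}
      (Matrix.trace (msqrt (Mᵀ * M))) ∧
    Matrix.trace (msqrt (Mᵀ * M)) ≥ (n : ℝ) * |M.det| ^ ((1 : ℝ) / n) :=
  stmt4_general M

end
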